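/- The Rieffel product is associative: let Θ be an invertible skew-symmetric real 4×4 matrix and let f, g, h : ℝ⁴ → ℂ be Schwartz functions. Then (interpreting each product as the absolutely convergent double integral, which is legitimate since the Rieffel product of two Schwartz functions is again Schwartz) one has ((f ×_Θ g) ×_Θ h)(z) = (f ×_Θ (g ×_Θ h))(z) for every z ∈ ℝ⁴. -/

import Mathlib

noncomputable section

open MeasureTheory Filter Matrix

/-- ℝ⁴ as a Euclidean space. -/
abbrev V4 : Type := EuclideanSpace ℝ (Fin 4)

/-- The Minkowski bilinear form B(x,y) = -x⁰y⁰ + x¹y¹ + x²y² + x³y³. -/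
def minkB (x y : V4) : ℝ := -(x 0 * y 0) + x 1 * y 1 + x 2 * y 2 + x 3 * y 3

/-- Matrix–vector multiplication Θx on ℝ⁴. -/
def thetaAct (Θ : Matrix (Fin 4) (Fin 4) ℝ) (x : V4) : V4 :=
  WithLp.toLp 2 (fun i => ∑ j, Θ i j * x j)

/-- The constant (2π)⁻⁴ as a complex number. -/
def c4 : ℂ := ((((2 * Real.pi) ^ 4)⁻¹ : ℝ) : ℂ)

/-- The Rieffel product (f ×_Θ g)(z) = (2π)⁻⁴ ∬ f(z+Θx) g(z+y) e^{-i B(x,y)} dx dy. -/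
def rieffel (Θ : Matrix (Fin 4) (Fin 4) ℝ) (f g : V4 → ℂ) (z : V4) : ℂ :=
  c4 * ∫ p : V4 × V4, f (z + thetaAct Θ p.1) * g (z + p.2) *
    Complex.exp (-Complex.I * (minkB p.1 p.2 : ℂ))

/-- The Minkowski Fourier transform (Fg)(ξ) = ∫ g(x) e^{-i B(ξ,x)} dx. -/
def minkFT (g : V4 → ℂ) (ξ : V4) : ℂ :=
  ∫ x : V4, g x * Complex.exp (-Complex.I * (minkB ξ x : ℂ))

/-! Write `ψ̂ = minkFT ψ`. Fubini and a translation in the second variable give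
`(φ ×_Θ ψ)(w) = (2π)⁻⁴ ∫ φ(w + Θu) e^{iB(u,w)} ψ̂(u) du`, whose kernel is integrable in `(u, w)`
after the measure-preserving shear `w ↦ w + Θu`; hence `φ ×_Θ ψ` is integrable and
`(φ ×_Θ ψ)^(ξ) = (2π)⁻⁴ ∫ ψ̂(u) φ̂(ξ - u) e^{iB(ξ-u, Θu)} du`. Expanding the left bracketing with
the first formula twice, and the right one with the first formula and then the second, both
sides become `(2π)⁻⁸ ∬ f(z + Θb) ĝ(b - a) ĥ(a) e^{iB(b,z)} e^{iB(b-a,Θa)}`, integrated in the two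
orders. This integrand is absolutely integrable because `ĝ` is bounded and `ĥ`, `f(z + Θ·)` are
integrable, so Fubini closes the argument. -/

open Complex

theorem MeasureTheory.Integrable.comp_linearMap_of_det_ne_zero {E F : Type*} [NormedAddCommGroup E]
    [NormedSpace ℝ E] [MeasurableSpace E] [BorelSpace E] [FiniteDimensional ℝ E]
    [NormedAddCommGroup F] {μ : Measure E} [μ.IsAddHaarMeasure] {f : E → F}
    (hf : Integrable f μ) {L : E →ₗ[ℝ] E} (hL : LinearMap.det L ≠ 0) :
    Integrable (fun x => f (L x)) μ := by
  let e : E ≃ᵐ E := (L.equivOfDetNeZero hL).toContinuousLinearEquiv.toHomeomorph.toMeasurableEquiv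
  have hmap : Measure.map e μ = ENNReal.ofReal |(LinearMap.det L)⁻¹| • μ :=
    Measure.map_linearMap_addHaar_eq_smul_addHaar μ hL
  exact (integrable_map_equiv e f).mp (hmap ▸ hf.smul_measure ENNReal.ofReal_ne_top)

theorem MeasureTheory.measurePreserving_prod_add_right_comp {α G : Type*} [MeasurableSpace α]
    [AddGroup G] [MeasurableSpace G] [MeasurableAdd₂ G] (μ : Measure α) (ν : Measure G) [SFinite μ]
    [SFinite ν] [ν.IsAddRightInvariant] {T : α → G} (hT : Measurable T) :
    MeasurePreserving (fun p : α × G => (p.1, p.2 + T p.1)) (μ.prod ν) (μ.prod ν) :=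
  (MeasurePreserving.id μ).skew_product (g := fun a c => c + T a)
    (measurable_snd.add (hT.comp measurable_fst))
    (ae_of_all _ fun a => map_add_right_eq_self ν (T a))

theorem thetaAct_eq_toLpLin (Θ : Matrix (Fin 4) (Fin 4) ℝ) (x : V4) :
    thetaAct Θ x = Matrix.toLpLin 2 2 Θ x := rfl

theorem Matrix.det_toLpLin {n R : Type*} [Fintype n] [DecidableEq n] [CommRing R]
    (p : ENNReal) (A : Matrix n n R) : LinearMap.det (Matrix.toLpLin p p A) = A.det := by
  rw [Matrix.toLpLin_eq_toLin, LinearMap.det_toLin]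

@[fun_prop]
theorem continuous_thetaAct (Θ : Matrix (Fin 4) (Fin 4) ℝ) : Continuous (thetaAct Θ) :=
  (Matrix.toLpLin 2 2 Θ).continuous_of_finiteDimensional

theorem thetaAct_sub (Θ : Matrix (Fin 4) (Fin 4) ℝ) (x y : V4) :
    thetaAct Θ (x - y) = thetaAct Θ x - thetaAct Θ y :=
  map_sub (Matrix.toLpLin 2 2 Θ) x y

theorem MeasureTheory.Integrable.comp_add_thetaAct {Θ : Matrix (Fin 4) (Fin 4) ℝ}
    (hinv : IsUnit Θ) {φ : V4 → ℂ} (hφ : Integrable φ) (c : V4) :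
    Integrable fun x => φ (c + thetaAct Θ x) := by
  have hdet : LinearMap.det (Matrix.toLpLin 2 2 Θ) ≠ 0 := by
    rw [Matrix.det_toLpLin]; exact ((Matrix.isUnit_iff_isUnit_det Θ).mp hinv).ne_zero
  simpa only [← thetaAct_eq_toLpLin] using (hφ.comp_add_left c).comp_linearMap_of_det_ne_zero hdet

def minkChar (x y : V4) : ℂ := exp (I * minkB x y)

theorem exp_neg_I_mul_minkB (x y : V4) : exp (-I * minkB x y) = minkChar (-x) y := by
  simp only [minkChar, minkB, PiLp.neg_apply]; push_cast; ring_nf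

theorem minkChar_mul_minkChar_of_eq {x y x' y' u v : V4}
    (h : minkB x y + minkB x' y' = minkB u v) :
    minkChar x y * minkChar x' y' = minkChar u v := by
  rw [minkChar, minkChar, minkChar, ← exp_add, ← h]; push_cast; ring_nf

theorem minkChar_mul_minkChar_eq_mul_of_eq {x y x' y' u v u' v' : V4}
    (h : minkB x y + minkB x' y' = minkB u v + minkB u' v') :
    minkChar x y * minkChar x' y' = minkChar u v * minkChar u' v' := by
  rw [minkChar, minkChar, minkChar, minkChar, ← exp_add, ← exp_add, ← mul_add, ← mul_add]
  exact_mod_cast congrArg (fun t : ℝ => exp (I * t)) h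

@[simp]
theorem norm_minkChar (x y : V4) : ‖minkChar x y‖ = 1 := by
  rw [minkChar, norm_exp_I_mul_ofReal]

@[fun_prop]
theorem Continuous.minkChar {α : Type*} [TopologicalSpace α] {u v : α → V4}
    (hu : Continuous u) (hv : Continuous v) : Continuous fun a => minkChar (u a) (v a) := by
  unfold _root_.minkChar minkB; fun_prop

theorem integral_comp_add_mul_minkChar (ψ : V4 → ℂ) (c ξ : V4) :
    ∫ y, ψ (c + y) * minkChar (-ξ) y = minkChar ξ c * minkFT ψ ξ := by
  have hshift : ∀ y, ψ (c + y) * minkChar (-ξ) y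
      = minkChar ξ c * (ψ (c + y) * minkChar (-ξ) (c + y)) := fun y => by
    rw [mul_left_comm, minkChar_mul_minkChar_of_eq]
    simp only [minkB, PiLp.add_apply, PiLp.neg_apply]; ring
  simp_rw [hshift, minkFT, exp_neg_I_mul_minkB]
  rw [integral_const_mul, integral_add_left_eq_self (fun y => ψ y * minkChar (-ξ) y) c]

def minkDual : V4 ≃L[ℝ] V4 :=
  letI c := (2 * Real.pi)⁻¹
  (LinearMap.equivOfDetNeZero (Matrix.toLpLin 2 2 (Matrix.diagonal ![-c, c, c, c])) <| by
    rw [Matrix.det_toLpLin, Matrix.det_diagonal]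
    simp [Fin.prod_univ_four, c, Real.pi_ne_zero]).toContinuousLinearEquiv

theorem inner_minkDual (ξ x : V4) : inner ℝ x (minkDual ξ) = (2 * Real.pi)⁻¹ * minkB ξ x := by
  simp [minkDual, PiLp.inner_apply, Fin.sum_univ_four, Matrix.toLpLin_apply,
    Matrix.mulVec_diagonal, minkB]
  ring

def minkFTSchwartz (ψ : SchwartzMap V4 ℂ) : SchwartzMap V4 ℂ :=
  SchwartzMap.compCLMOfContinuousLinearEquiv ℝ minkDual (FourierTransform.fourier ψ)

@[simp]
theorem coe_minkFTSchwartz (ψ : SchwartzMap V4 ℂ) : ⇑(minkFTSchwartz ψ) = minkFT ψ := by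
  ext ξ
  simp only [minkFTSchwartz, SchwartzMap.compCLMOfContinuousLinearEquiv_apply, Function.comp_apply,
    SchwartzMap.fourier_coe, Real.fourier_eq', minkFT, inner_minkDual, smul_eq_mul]
  congr 1 with x
  rw [mul_comm]
  congr 2
  rw [show -2 * Real.pi * ((2 * Real.pi)⁻¹ * minkB ξ x) = -minkB ξ x by field_simp]
  push_cast
  ring

theorem norm_minkFT_le (ψ : V4 → ℂ) (ξ : V4) : ‖minkFT ψ ξ‖ ≤ ∫ x, ‖ψ x‖ := by
  refine (norm_integral_le_integral_norm _).trans_eq ?_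
  simp_rw [exp_neg_I_mul_minkB, norm_mul, norm_minkChar, mul_one]

theorem integrable_minkFT (ψ : SchwartzMap V4 ℂ) : Integrable (minkFT ψ) :=
  coe_minkFTSchwartz ψ ▸ (minkFTSchwartz ψ).integrable

@[fun_prop]
theorem continuous_minkFT (ψ : SchwartzMap V4 ℂ) : Continuous (minkFT ψ) :=
  coe_minkFTSchwartz ψ ▸ (minkFTSchwartz ψ).continuous

theorem integrable_rieffel_kernel (Θ : Matrix (Fin 4) (Fin 4) ℝ) {φ G : V4 → ℂ}
    (hφ : Integrable φ) (hG : Integrable G) :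
    Integrable (fun p : V4 × V4 => φ (p.2 + thetaAct Θ p.1) * minkChar p.1 p.2 * G p.1)
      (volume.prod volume) := by
  have hshear := (measurePreserving_prod_add_right_comp volume volume
    (continuous_thetaAct Θ).measurable).integrable_comp_of_integrable (hG.mul_prod hφ)
  have hχ : Continuous fun p : V4 × V4 => minkChar p.1 p.2 := by fun_prop
  refine (hshear.mul_bdd hχ.aestronglyMeasurable
    (ae_of_all _ fun p => (norm_minkChar _ _).le)).congr (ae_of_all _ fun p => ?_)
  simp only [Function.comp_apply]
  ring

section Rieffel

variable {Θ : Matrix (Fin 4) (Fin 4) ℝ}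

theorem rieffel_eq_integral_minkFT {φ ψ : V4 → ℂ} {c : V4}
    (hφ : Integrable fun x => φ (c + thetaAct Θ x)) (hψ : Integrable ψ) :
    rieffel Θ φ ψ c = c4 * ∫ x, φ (c + thetaAct Θ x) * minkChar x c * minkFT ψ x := by
  have hint : Integrable (fun p : V4 × V4 => φ (c + thetaAct Θ p.1) * ψ (c + p.2) *
      minkChar (-p.1) p.2) (volume.prod volume) :=
    (hφ.mul_prod (hψ.comp_add_left c)).mul_bdd (by fun_prop : Continuous fun p : V4 × V4 =>
      minkChar (-p.1) p.2).aestronglyMeasurable (ae_of_all _ fun p => (norm_minkChar _ _).le)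
  simp_rw [rieffel, exp_neg_I_mul_minkB, Measure.volume_eq_prod, integral_prod _ hint, mul_assoc,
    integral_const_mul, integral_comp_add_mul_minkChar]

theorem integrable_rieffel (hinv : IsUnit Θ) (φ ψ : SchwartzMap V4 ℂ) :
    Integrable (rieffel Θ φ ψ) := by
  refine (((integrable_rieffel_kernel Θ φ.integrable (integrable_minkFT ψ)).integral_prod_right
    ).const_mul c4).congr (ae_of_all _ fun w => ?_)
  rw [rieffel_eq_integral_minkFT (φ.integrable.comp_add_thetaAct hinv w) ψ.integrable]

theorem minkFT_rieffel (hinv : IsUnit Θ) (φ ψ : SchwartzMap V4 ℂ) (ξ : V4) :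
    minkFT (rieffel Θ φ ψ) ξ
      = c4 * ∫ u, minkFT ψ u * minkFT φ (ξ - u) * minkChar (ξ - u) (thetaAct Θ u) := by
  have hχ : Continuous fun p : V4 × V4 => minkChar (-ξ) p.2 := by fun_prop
  have hint := (integrable_rieffel_kernel Θ φ.integrable (integrable_minkFT ψ)).mul_bdd
    hχ.aestronglyMeasurable (ae_of_all _ fun p => (norm_minkChar _ _).le)
  calc minkFT (rieffel Θ φ ψ) ξ
      = ∫ y, (c4 * ∫ u, φ (y + thetaAct Θ u) * minkChar u y * minkFT ψ u) * minkChar (-ξ) y := by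
        rw [minkFT]
        simp_rw [exp_neg_I_mul_minkB,
          rieffel_eq_integral_minkFT (φ.integrable.comp_add_thetaAct hinv _) ψ.integrable]
    _ = c4 * ∫ y, ∫ u, φ (y + thetaAct Θ u) * minkChar u y * minkFT ψ u * minkChar (-ξ) y := by
        simp_rw [mul_assoc c4, ← integral_mul_const, integral_const_mul]
    _ = c4 * ∫ u, ∫ y, φ (y + thetaAct Θ u) * minkChar u y * minkFT ψ u * minkChar (-ξ) y := by
        congr 1
        exact integral_integral_swap hint.swap
    _ = c4 * ∫ u, minkFT ψ u * ∫ y, φ (thetaAct Θ u + y) * minkChar (-(ξ - u)) y := by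
        congr 2 with u
        rw [← integral_const_mul]
        congr 1 with y
        rw [add_comm, ← minkChar_mul_minkChar_of_eq (x := u) (y := y) (x' := -ξ) (y' := y)
          (u := -(ξ - u)) (v := y)]
        · ring
        · simp only [minkB, PiLp.neg_apply, PiLp.sub_apply]; ring
    _ = c4 * ∫ u, minkFT ψ u * minkFT φ (ξ - u) * minkChar (ξ - u) (thetaAct Θ u) := by
        simp_rw [integral_comp_add_mul_minkChar]
        congr 2 with u
        ring

end Rieffel

def assocKernel (Θ : Matrix (Fin 4) (Fin 4) ℝ) (f g h : V4 → ℂ) (z a b : V4) : ℂ :=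
  f (z + thetaAct Θ b) * minkFT g (b - a) * minkFT h a * minkChar b z *
    minkChar (b - a) (thetaAct Θ a)

section Assoc

variable {Θ : Matrix (Fin 4) (Fin 4) ℝ}

theorem integrable_assocKernel (hinv : IsUnit Θ) (f g h : SchwartzMap V4 ℂ) (z : V4) :
    Integrable (Function.uncurry (assocKernel Θ f g h z)) (volume.prod volume) := by
  have hbdd : Continuous fun p : V4 × V4 =>
      minkFT g (p.2 - p.1) * minkChar p.2 z * minkChar (p.2 - p.1) (thetaAct Θ p.1) := by
    fun_prop
  refine (((integrable_minkFT h).mul_prod (f.integrable.comp_add_thetaAct hinv z)).mul_bdd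
    (c := ∫ x, ‖g x‖) hbdd.aestronglyMeasurable (ae_of_all _ fun p => ?_)).congr
    (ae_of_all _ fun p => ?_)
  · simpa using norm_minkFT_le g (p.2 - p.1)
  · simp only [Function.uncurry, assocKernel]
    ring

theorem rieffel_rieffel_left (hinv : IsUnit Θ) (f g h : SchwartzMap V4 ℂ) (z : V4) :
    rieffel Θ (rieffel Θ f g) h z = c4 * (c4 * ∫ a, ∫ b, assocKernel Θ f g h z a b) := by
  rw [rieffel_eq_integral_minkFT ((integrable_rieffel hinv f g).comp_add_thetaAct hinv z)
    h.integrable]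
  congr 1
  rw [← integral_const_mul]
  congr 1 with a
  rw [rieffel_eq_integral_minkFT (f.integrable.comp_add_thetaAct hinv _) g.integrable, mul_assoc,
    mul_assoc c4, ← integral_mul_const, ← integral_sub_right_eq_self _ a]
  congr 2 with b
  have hphase : minkChar (b - a) (z + thetaAct Θ a) * minkChar a z
      = minkChar b z * minkChar (b - a) (thetaAct Θ a) :=
    minkChar_mul_minkChar_eq_mul_of_eq <| by
      simp only [minkB, PiLp.add_apply, PiLp.sub_apply]; ring
  rw [thetaAct_sub, add_add_sub_cancel, assocKernel]
  linear_combination (f (z + thetaAct Θ b) * minkFT g (b - a) * minkFT h a) * hphase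

theorem rieffel_rieffel_right (hinv : IsUnit Θ) (f g h : SchwartzMap V4 ℂ) (z : V4) :
    rieffel Θ f (rieffel Θ g h) z = c4 * (c4 * ∫ b, ∫ a, assocKernel Θ f g h z a b) := by
  rw [rieffel_eq_integral_minkFT (f.integrable.comp_add_thetaAct hinv z)
    (integrable_rieffel hinv g h)]
  congr 1
  rw [← integral_const_mul]
  congr 1 with b
  rw [minkFT_rieffel hinv g h, mul_left_comm]
  congr 1
  rw [← integral_const_mul]
  congr 1 with a
  simp only [assocKernel]
  ring

end Assoc

theorem rieffel_assoc_general (Θ : Matrix (Fin 4) (Fin 4) ℝ)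
    (hinv : IsUnit Θ)
    (f g h : SchwartzMap V4 ℂ) (z : V4) :
    rieffel Θ (rieffel Θ (⇑f) (⇑g)) (⇑h) z = rieffel Θ (⇑f) (rieffel Θ (⇑g) (⇑h)) z := by
  rw [rieffel_rieffel_left hinv, rieffel_rieffel_right hinv,
    integral_integral_swap (integrable_assocKernel hinv f g h z)]

/-- associativity of the Rieffel product of Schwartz functions, with each
product interpreted as the absolutely convergent double integral. -/
theorem rieffel_assoc (Θ : Matrix (Fin 4) (Fin 4) ℝ)
    (hinv : IsUnit Θ) (hskew : Θᵀ = -Θ)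
    (f g h : SchwartzMap V4 ℂ) (z : V4) :
    rieffel Θ (rieffel Θ (⇑f) (⇑g)) (⇑h) z = rieffel Θ (⇑f) (rieffel Θ (⇑g) (⇑h)) z :=
  rieffel_assoc_general Θ hinv f g h z
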